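/- arXiv:1909.01853 — 3 statements merged into one kernel-verified Lean document; each statement's English description precedes it below -/
import Mathlib

section
/- Let Ω ⊆ ℝ³ be open, let μ : Ω → ℝ be measurable, and let H, H_h, H̃, j : Ω → ℝ³ be locally integrable vector fields such that both H and H̃ have weak curl j in Ω. Suppose e : ℝ³ → ℝ³ is continuously differentiable with compact support contained in Ω and μ(x)·(H(x) − H_h(x)) = (curl e)(x) for almost every x ∈ Ω. Then the function x ↦ μ(x)·(H̃(x) − H(x)) · (H(x) − H_h(x)) is integrable on Ω and ∫_Ω μ (H̃ − H) · (H − H_h) dx = 0. -/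
open MeasureTheory

/-- Partial derivative of a scalar function on ℝ³ in direction `i`. -/
noncomputable def pd3 (f : (Fin 3 → ℝ) → ℝ) (i : Fin 3) (x : Fin 3 → ℝ) : ℝ :=
  fderiv ℝ f x (Pi.single i 1)

/-- The curl of a vector field on ℝ³. -/
noncomputable def curl3 (F : (Fin 3 → ℝ) → (Fin 3 → ℝ)) (x : Fin 3 → ℝ) : Fin 3 → ℝ :=
  ![pd3 (fun y => F y 2) 1 x - pd3 (fun y => F y 1) 2 x,
    pd3 (fun y => F y 0) 2 x - pd3 (fun y => F y 2) 0 x,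
    pd3 (fun y => F y 1) 0 x - pd3 (fun y => F y 0) 1 x]

/-- Euclidean dot product on ℝ³. -/
def dot3 (a b : Fin 3 → ℝ) : ℝ := ∑ i, a i * b i

/-- `G` has weak curl `g` in the open set `Ω`: for every continuously differentiable
vector field `w` with compact support contained in `Ω`, the integrands `G ⬝ curl w` and
`g ⬝ w` are integrable on `Ω` and `∫_Ω G ⬝ curl w = ∫_Ω g ⬝ w`. -/
def HasWeakCurlOn (G g : (Fin 3 → ℝ) → (Fin 3 → ℝ)) (Ω : Set (Fin 3 → ℝ)) : Prop :=
  ∀ w : (Fin 3 → ℝ) → (Fin 3 → ℝ),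
    ContDiff ℝ 1 w → HasCompactSupport w → tsupport w ⊆ Ω →
      IntegrableOn (fun x => dot3 (G x) (curl3 w x)) Ω volume ∧
      IntegrableOn (fun x => dot3 (g x) (w x)) Ω volume ∧
      ∫ x in Ω, dot3 (G x) (curl3 w x) = ∫ x in Ω, dot3 (g x) (w x)

theorem dot3_eq_dotProduct (a b : Fin 3 → ℝ) : dot3 a b = a ⬝ᵥ b := rfl

namespace HasWeakCurlOn

variable {G G₁ G₂ g g₁ g₂ : (Fin 3 → ℝ) → (Fin 3 → ℝ)} {Ω : Set (Fin 3 → ℝ)}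

theorem sub (h₁ : HasWeakCurlOn G₁ g₁ Ω) (h₂ : HasWeakCurlOn G₂ g₂ Ω) :
    HasWeakCurlOn (G₁ - G₂) (g₁ - g₂) Ω := by
  intro w hw hws hwΩ
  obtain ⟨hG₁, hg₁, heq₁⟩ := h₁ w hw hws hwΩ
  obtain ⟨hG₂, hg₂, heq₂⟩ := h₂ w hw hws hwΩ
  simp only [dot3_eq_dotProduct, Pi.sub_apply, sub_dotProduct] at *
  exact ⟨hG₁.sub hG₂, hg₁.sub hg₂, by
    rw [integral_sub hG₁ hG₂, integral_sub hg₁ hg₂, heq₁, heq₂]⟩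

theorem sub_of_same_curl (h₁ : HasWeakCurlOn G₁ g Ω) (h₂ : HasWeakCurlOn G₂ g Ω) :
    HasWeakCurlOn (G₁ - G₂) 0 Ω :=
  sub_self g ▸ h₁.sub h₂

theorem integral_dot_curl_eq_zero (hG : HasWeakCurlOn G 0 Ω)
    {w : (Fin 3 → ℝ) → (Fin 3 → ℝ)} (hw : ContDiff ℝ 1 w) (hws : HasCompactSupport w)
    (hwΩ : tsupport w ⊆ Ω) :
    IntegrableOn (fun x => dot3 (G x) (curl3 w x)) Ω volume ∧
      ∫ x in Ω, dot3 (G x) (curl3 w x) = 0 := by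
  obtain ⟨hint, -, heq⟩ := hG w hw hws hwΩ
  refine ⟨hint, heq.trans ?_⟩
  simp [dot3]

theorem integral_weighted_dot_eq_zero (hΩ : MeasurableSet Ω) (hG : HasWeakCurlOn G 0 Ω)
    {μ : (Fin 3 → ℝ) → ℝ} {E e : (Fin 3 → ℝ) → (Fin 3 → ℝ)}
    (he : ContDiff ℝ 1 e) (hes : HasCompactSupport e) (heΩ : tsupport e ⊆ Ω)
    (hrep : ∀ᵐ x ∂volume, x ∈ Ω → μ x • E x = curl3 e x) :
    IntegrableOn (fun x => μ x * dot3 (G x) (E x)) Ω volume ∧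
      ∫ x in Ω, μ x * dot3 (G x) (E x) = 0 := by
  have hae : (fun x => μ x * dot3 (G x) (E x)) =ᵐ[volume.restrict Ω]
      fun x => dot3 (G x) (curl3 e x) := by
    rw [Filter.EventuallyEq, ae_restrict_iff' hΩ]
    filter_upwards [hrep] with x hx hxΩ
    rw [← hx hxΩ, dot3_eq_dotProduct, dot3_eq_dotProduct, dotProduct_smul, smul_eq_mul]
  obtain ⟨hint, hzero⟩ := hG.integral_dot_curl_eq_zero he hes heΩ
  exact ⟨hint.congr hae.symm, (integral_congr_ae hae).trans hzero⟩

end HasWeakCurlOn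

theorem orthogonality_of_equilibrated_error_general
    (Ω : Set (Fin 3 → ℝ)) (hΩ : IsOpen Ω)
    (μ : (Fin 3 → ℝ) → ℝ)
    (H Hh Ht j : (Fin 3 → ℝ) → (Fin 3 → ℝ))
    (hH : HasWeakCurlOn H j Ω) (hHt : HasWeakCurlOn Ht j Ω)
    (e : (Fin 3 → ℝ) → (Fin 3 → ℝ))
    (he : ContDiff ℝ 1 e) (hesupp : HasCompactSupport e) (heΩ : tsupport e ⊆ Ω)
    (hrep : ∀ᵐ x ∂volume, x ∈ Ω → μ x • (H x - Hh x) = curl3 e x) :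
    IntegrableOn (fun x => μ x * dot3 (Ht x - H x) (H x - Hh x)) Ω volume ∧
    ∫ x in Ω, μ x * dot3 (Ht x - H x) (H x - Hh x) = 0 :=
  (hHt.sub_of_same_curl hH).integral_weighted_dot_eq_zero hΩ.measurableSet he hesupp heΩ hrep

theorem orthogonality_of_equilibrated_error
    (Ω : Set (Fin 3 → ℝ)) (hΩ : IsOpen Ω)
    (μ : (Fin 3 → ℝ) → ℝ) (hμ : Measurable μ)
    (H Hh Ht j : (Fin 3 → ℝ) → (Fin 3 → ℝ))
    (hHloc : LocallyIntegrableOn H Ω volume)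
    (hHhloc : LocallyIntegrableOn Hh Ω volume)
    (hHtloc : LocallyIntegrableOn Ht Ω volume)
    (hjloc : LocallyIntegrableOn j Ω volume)
    (hH : HasWeakCurlOn H j Ω) (hHt : HasWeakCurlOn Ht j Ω)
    (e : (Fin 3 → ℝ) → (Fin 3 → ℝ))
    (he : ContDiff ℝ 1 e) (hesupp : HasCompactSupport e) (heΩ : tsupport e ⊆ Ω)
    (hrep : ∀ᵐ x ∂volume, x ∈ Ω → μ x • (H x - Hh x) = curl3 e x) :
    IntegrableOn (fun x => μ x * dot3 (Ht x - H x) (H x - Hh x)) Ω volume ∧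
    ∫ x in Ω, μ x * dot3 (Ht x - H x) (H x - Hh x) = 0 :=
  orthogonality_of_equilibrated_error_general Ω hΩ μ H Hh Ht j hH hHt e he hesupp heΩ hrep
end

section
/- Polynomial exactness of the curl at the Raviart–Thomas stage: let k ≥ 1 and let u : ℝ³ → ℝ³ be of Raviart–Thomas form D_k. If div u = 0 everywhere on ℝ³, then there exist vector fields a, b : ℝ³ → ℝ³ with components in P_{k−1} such that the Nédélec-form field A(x) := a(x) + x × b(x) satisfies curl A = u everywhere on ℝ³. -/
open MeasureTheory

/-- The divergence of a vector field on ℝ³. -/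
noncomputable def div3 (F : (Fin 3 → ℝ) → (Fin 3 → ℝ)) (x : Fin 3 → ℝ) : ℝ :=
  ∑ i, pd3 (fun y => F y i) i x

/-- The gradient of a scalar function on ℝ³. -/
noncomputable def grad3 (f : (Fin 3 → ℝ) → ℝ) (x : Fin 3 → ℝ) : Fin 3 → ℝ :=
  fun i => fderiv ℝ f x (Pi.single i 1)

/-- Cross product on ℝ³. -/
def cross3 (a b : Fin 3 → ℝ) : Fin 3 → ℝ :=
  ![a 1 * b 2 - a 2 * b 1, a 2 * b 0 - a 0 * b 2, a 0 * b 1 - a 1 * b 0]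

/-- `f` is (the evaluation of) a real polynomial in three variables of total degree ≤ k. -/
def IsPolyFun3 (k : ℕ) (f : (Fin 3 → ℝ) → ℝ) : Prop :=
  ∃ p : MvPolynomial (Fin 3) ℝ, p.totalDegree ≤ k ∧ ∀ x, f x = MvPolynomial.eval x p

/-- `A` is of Nédélec form `R_k`: `A x = a x + x × b x` with the components of `a, b`
polynomials of total degree at most `k - 1`. -/
def IsNedelec (k : ℕ) (A : (Fin 3 → ℝ) → (Fin 3 → ℝ)) : Prop :=
  ∃ a b : (Fin 3 → ℝ) → (Fin 3 → ℝ),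
    (∀ i, IsPolyFun3 (k - 1) (fun x => a x i)) ∧
    (∀ i, IsPolyFun3 (k - 1) (fun x => b x i)) ∧
    ∀ x, A x = a x + cross3 x (b x)

/-- `u` is of Raviart–Thomas form `D_k`: `u x = v x + (w x) • x` with the components of `v`
and the scalar `w` polynomials of total degree at most `k - 1`. -/
def IsRT (k : ℕ) (u : (Fin 3 → ℝ) → (Fin 3 → ℝ)) : Prop :=
  ∃ (v : (Fin 3 → ℝ) → (Fin 3 → ℝ)) (w : (Fin 3 → ℝ) → ℝ),
    (∀ i, IsPolyFun3 (k - 1) (fun x => v x i)) ∧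
    IsPolyFun3 (k - 1) w ∧
    ∀ x, u x = v x + w x • x

/-- The standard reference tetrahedron in ℝ³. -/
def refTet : Set (Fin 3 → ℝ) := {x | (∀ i, 0 ≤ x i) ∧ ∑ i, x i ≤ 1}

/-!
Write `u` as the polynomial field `P = v + q X`. Since `div` lowers degree by one, the degree-`k`
part `r X` of `P` (with `r` the degree-`(k-1)` part of `q`) is divergence free, while Euler's
identity gives `div (r X) = (k + 2) r`; hence `r = 0` and `P` has degree at most `k - 1`.
For a divergence-free field `U` homogeneous of degree `m`,
`curl (X × U) = X div U - 2 U - (X · ∇) U = -(m + 2) U`, again by Euler's identity. Every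
homogeneous component `Pₘ` of `P` is divergence free, so `B = -∑ₘ (m + 2)⁻¹ Pₘ` satisfies
`curl (X × B) = P`, and `A = X × B` is of Nédélec form with `a = 0`.
-/

open Matrix

namespace MvPolynomial

variable {σ R : Type*}

section CommSemiring

variable [CommSemiring R]

theorem pderiv_homogeneousComponent_succ (i : σ) (n : ℕ) (φ : MvPolynomial σ R) :
    pderiv i (homogeneousComponent (n + 1) φ) = homogeneousComponent n (pderiv i φ) := by
  ext d
  simp only [coeff_pderiv, coeff_homogeneousComponent, map_add, Finsupp.degree_single,
    Nat.add_right_cancel_iff]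
  split_ifs <;> simp

theorem homogeneousComponent_add_mul {φ ψ : MvPolynomial σ R} {m : ℕ}
    (hψ : ψ.IsHomogeneous m) (n : ℕ) :
    homogeneousComponent (n + m) (φ * ψ) = homogeneousComponent n φ * ψ := by
  have hterm : ∀ j, homogeneousComponent (n + m) (homogeneousComponent j φ * ψ) =
      if n = j then homogeneousComponent n φ * ψ else 0 := by
    intro j
    rw [homogeneousComponent_of_mem ((homogeneousComponent_isHomogeneous j φ).mul hψ)]
    split_ifs <;> first | subst_vars; rfl | omega
  conv_lhs => rw [← sum_homogeneousComponent φ]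
  rw [Finset.sum_mul, map_sum, Finset.sum_congr rfl fun j _ => hterm j, Finset.sum_ite_eq]
  split_ifs with hn
  · rfl
  · rw [homogeneousComponent_eq_zero _ _ (by simpa using hn), zero_mul]

theorem sum_range_homogeneousComponent {φ : MvPolynomial σ R} {n : ℕ}
    (h : φ.totalDegree ≤ n) :
    ∑ m ∈ Finset.range (n + 1), homogeneousComponent m φ = φ := by
  conv_rhs => rw [← sum_homogeneousComponent φ]
  refine (Finset.sum_subset (fun m hm => ?_) fun m _ hm => ?_).symm
  · simp only [Finset.mem_range] at hm ⊢
    omega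
  · simp only [Finset.mem_range, not_lt] at hm
    exact homogeneousComponent_eq_zero m φ (by omega)

theorem totalDegree_le_of_homogeneousComponent_eq_zero {φ : MvPolynomial σ R} {n : ℕ}
    (h : φ.totalDegree ≤ n + 1) (htop : homogeneousComponent (n + 1) φ = 0) :
    φ.totalDegree ≤ n := by
  rw [← sum_range_homogeneousComponent h, Finset.sum_range_succ, htop, add_zero]
  refine totalDegree_finsetSum_le fun m hm => ?_
  exact (homogeneousComponent_isHomogeneous m φ).totalDegree_le.trans
    (Nat.lt_succ_iff.mp (Finset.mem_range.mp hm))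

end CommSemiring

theorem hasFDerivAt_eval {𝕜 : Type*} [NontriviallyNormedField 𝕜] [Fintype σ]
    (p : MvPolynomial σ 𝕜) (x : σ → 𝕜) :
    HasFDerivAt (fun y => eval y p)
      (∑ i, eval x (pderiv i p) • (ContinuousLinearMap.proj i : (σ → 𝕜) →L[𝕜] 𝕜)) x := by
  classical
  induction p using MvPolynomial.induction_on with
  | C a =>
    simp only [eval_C]
    exact (hasFDerivAt_const a x).congr_fderiv (by ext v; simp)
  | add p q hp hq =>
    simp only [map_add]
    refine (hp.add hq).congr_fderiv ?_
    ext v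
    simp [add_mul, Finset.sum_add_distrib]
  | mul_X p j hp =>
    simp only [map_mul, eval_X]
    refine (hp.mul (hasFDerivAt_apply j x)).congr_fderiv ?_
    ext i
    simp [pderiv_X, Pi.single_apply, apply_ite, Finset.mul_sum, add_mul, Finset.sum_add_distrib,
      ite_mul, mul_assoc]

end MvPolynomial

open MvPolynomial

section Divergence

variable {σ R : Type*} [Fintype σ]

section CommSemiring

variable [CommSemiring R]

noncomputable def polyDiv (F : σ → MvPolynomial σ R) : MvPolynomial σ R :=
  ∑ i, pderiv i (F i)

theorem polyDiv_homogeneousComponent_succ (F : σ → MvPolynomial σ R) (n : ℕ) :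
    polyDiv (fun i => homogeneousComponent (n + 1) (F i)) = homogeneousComponent n (polyDiv F) := by
  simp only [polyDiv, pderiv_homogeneousComponent_succ, map_sum]

theorem polyDiv_homogeneousComponent_eq_zero {F : σ → MvPolynomial σ R} (hF : polyDiv F = 0)
    (m : ℕ) : polyDiv (fun i => homogeneousComponent m (F i)) = 0 := by
  cases m with
  | zero => simp [polyDiv, homogeneousComponent_zero]
  | succ n => rw [polyDiv_homogeneousComponent_succ, hF, map_zero]

theorem polyDiv_mul_X {r : MvPolynomial σ R} {n : ℕ} (hr : r.IsHomogeneous n) :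
    polyDiv (fun i => r * X i) = (n + Fintype.card σ) • r := by
  simp only [polyDiv, pderiv_mul, pderiv_X_self, mul_one, Finset.sum_add_distrib,
    Finset.sum_const, Finset.card_univ, add_smul]
  rw [← hr.sum_X_mul_pderiv]
  simp only [mul_comm]

end CommSemiring

theorem totalDegree_le_of_polyDiv_eq_zero [CommRing R] [IsDomain R] [CharZero R]
    {v : σ → MvPolynomial σ R} {q : MvPolynomial σ R} {n : ℕ}
    (hv : ∀ i, (v i).totalDegree ≤ n) (hq : q.totalDegree ≤ n)
    (hdiv : polyDiv (fun i => v i + q * X i) = 0) (i : σ) :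
    (v i + q * X i).totalDegree ≤ n := by
  have htop : ∀ j, homogeneousComponent (n + 1) (v j + q * X j) =
      homogeneousComponent n q * X j := fun j => by
    rw [map_add, homogeneousComponent_eq_zero _ _ (Nat.lt_succ_of_le (hv j)), zero_add,
      homogeneousComponent_add_mul (isHomogeneous_X R j)]
  have hr : homogeneousComponent n q = 0 := by
    have h := polyDiv_homogeneousComponent_succ (fun j => v j + q * X j) n
    simp only [htop, hdiv, map_zero,
      polyDiv_mul_X (homogeneousComponent_isHomogeneous n q)] at h
    have hcard : n + Fintype.card σ ≠ 0 := by
      have := Fintype.card_pos_iff.mpr ⟨i⟩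
      omega
    exact (smul_eq_zero.mp h).resolve_left hcard
  refine totalDegree_le_of_homogeneousComponent_eq_zero ?_ (by rw [htop, hr, zero_mul])
  refine (totalDegree_add _ _).trans (max_le ((hv i).trans n.le_succ) ?_)
  refine (totalDegree_mul _ _).trans ?_
  rw [totalDegree_X]
  omega

end Divergence

section Curl

variable {R : Type*} [CommRing R]

noncomputable def polyCurl :
    (Fin 3 → MvPolynomial (Fin 3) R) →ₗ[R] Fin 3 → MvPolynomial (Fin 3) R where
  toFun F := ![pderiv 1 (F 2) - pderiv 2 (F 1), pderiv 2 (F 0) - pderiv 0 (F 2),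
    pderiv 0 (F 1) - pderiv 1 (F 0)]
  map_add' F G := by
    simp only [Pi.add_apply, map_add, vec3_add]
    apply vec3_eq <;> abel
  map_smul' c F := by
    simp only [Pi.smul_apply, Derivation.map_smul, smul_vec3, smul_sub, RingHom.id_apply]

theorem polyCurl_apply (F : Fin 3 → MvPolynomial (Fin 3) R) :
    polyCurl F = ![pderiv 1 (F 2) - pderiv 2 (F 1), pderiv 2 (F 0) - pderiv 0 (F 2),
      pderiv 0 (F 1) - pderiv 1 (F 0)] := rfl

theorem polyCurl_X_cross (B : Fin 3 → MvPolynomial (Fin 3) R) (j : Fin 3) :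
    polyCurl (X ⨯₃ B) j = X j * polyDiv B - 2 * B j - ∑ i, X i * pderiv i (B j) := by
  fin_cases j <;>
  · simp only [polyCurl_apply, polyDiv, cross_apply, Fin.sum_univ_three, map_sub,
      Derivation.leibniz, smul_eq_mul, pderiv_X, Pi.single_apply, Fin.isValue, Fin.zero_eta,
      Fin.mk_one, Fin.reduceFinMk, Fin.reduceEq, cons_val, cons_val_zero, cons_val_one, if_true,
      if_false]
    ring

theorem polyCurl_X_cross_of_isHomogeneous {U : Fin 3 → MvPolynomial (Fin 3) R}
    {m : ℕ} (hU : ∀ i, (U i).IsHomogeneous m) (hdiv : polyDiv U = 0) :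
    polyCurl (X ⨯₃ U) = -(((m : R) + 2) • U) := by
  ext1 j
  rw [polyCurl_X_cross, hdiv, (hU j).sum_X_mul_pderiv]
  simp only [mul_zero, zero_sub, nsmul_eq_mul, Pi.neg_apply, Pi.smul_apply, smul_eq_C_mul, C_add,
    map_natCast, map_ofNat]
  ring

theorem exists_polyCurl_X_cross_eq {K : Type*} [Field K] [CharZero K]
    {P : Fin 3 → MvPolynomial (Fin 3) K} {n : ℕ}
    (hP : polyDiv P = 0) (hdeg : ∀ i, (P i).totalDegree ≤ n) :
    ∃ B : Fin 3 → MvPolynomial (Fin 3) K,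
      (∀ i, (B i).totalDegree ≤ n) ∧ polyCurl (X ⨯₃ B) = P := by
  set U : ℕ → Fin 3 → MvPolynomial (Fin 3) K := fun m i => homogeneousComponent m (P i)
  refine ⟨-∑ m ∈ Finset.range (n + 1), ((m : K) + 2)⁻¹ • U m, fun i => ?_, ?_⟩
  · simp only [Pi.neg_apply, Finset.sum_apply, Pi.smul_apply, totalDegree_neg]
    refine totalDegree_finsetSum_le fun m hm => (totalDegree_smul_le _ _).trans ?_
    exact (homogeneousComponent_isHomogeneous m (P i)).totalDegree_le.trans
      (Nat.lt_succ_iff.mp (Finset.mem_range.mp hm))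
  · have hU : ∀ m, polyCurl (X ⨯₃ U m) = -(((m : K) + 2) • U m) := fun m =>
      polyCurl_X_cross_of_isHomogeneous (fun i => homogeneousComponent_isHomogeneous m (P i))
        (polyDiv_homogeneousComponent_eq_zero hP m)
    have hm2 : ∀ m : ℕ, ((m : K) + 2)⁻¹ * ((m : K) + 2) = 1 := fun m =>
      inv_mul_cancel₀ (by exact_mod_cast (m + 1).succ_ne_zero)
    simp only [map_neg, map_sum, LinearMap.map_smul_of_tower, hU, smul_neg,
      Finset.sum_neg_distrib, neg_neg, smul_smul, hm2, one_smul]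
    ext1 i
    rw [Finset.sum_apply]
    exact sum_range_homogeneousComponent (hdeg i)

end Curl

theorem pd3_eval (p : MvPolynomial (Fin 3) ℝ) (i : Fin 3) (x : Fin 3 → ℝ) :
    pd3 (fun y => eval y p) i x = eval x (pderiv i p) := by
  simp [pd3, (hasFDerivAt_eval p x).fderiv, Pi.single_apply]

theorem div3_eval (F : Fin 3 → MvPolynomial (Fin 3) ℝ) (x : Fin 3 → ℝ) :
    div3 (fun y i => eval y (F i)) x = eval x (polyDiv F) := by
  simp [div3, polyDiv, pd3_eval]

theorem curl3_eval (F : Fin 3 → MvPolynomial (Fin 3) ℝ) (x : Fin 3 → ℝ) :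
    curl3 (fun y i => eval y (F i)) x = fun j => eval x (polyCurl F j) := by
  ext j
  fin_cases j <;> simp [curl3, polyCurl_apply, pd3_eval]

theorem cross3_eval (B : Fin 3 → MvPolynomial (Fin 3) ℝ) (y : Fin 3 → ℝ) :
    cross3 y (fun i => eval y (B i)) = fun i => eval y ((X ⨯₃ B) i) := by
  ext i
  fin_cases i <;> simp [cross3, cross_apply]

theorem rt_divfree_is_curl_of_nedelec_general (k : ℕ)
    (u : (Fin 3 → ℝ) → (Fin 3 → ℝ)) (hu : IsRT k u)
    (hdiv : ∀ x, div3 u x = 0) :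
    ∃ a b : (Fin 3 → ℝ) → (Fin 3 → ℝ),
      (∀ i, IsPolyFun3 (k - 1) (fun x => a x i)) ∧
      (∀ i, IsPolyFun3 (k - 1) (fun x => b x i)) ∧
      ∀ x, curl3 (fun y => a y + cross3 y (b y)) x = u x := by
  obtain ⟨v, w, hv, ⟨q, hq, hqw⟩, huvw⟩ := hu
  choose pv hpv hpvv using hv
  set P : Fin 3 → MvPolynomial (Fin 3) ℝ := fun i => pv i + q * X i
  obtain rfl : u = fun y i => eval y (P i) := by
    funext y i
    simp [P, huvw, hpvv, hqw, mul_comm]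
  have hP : polyDiv P = 0 := MvPolynomial.funext fun x => by simp [← div3_eval, hdiv]
  obtain ⟨B, hB, hcurl⟩ :=
    exists_polyCurl_X_cross_eq hP (totalDegree_le_of_polyDiv_eq_zero hpv hq hP)
  refine ⟨0, fun y i => eval y (B i), fun _ => ⟨0, by simp, by simp⟩,
    fun i => ⟨B i, hB i, fun _ => rfl⟩, fun x => ?_⟩
  simp only [Pi.zero_apply, zero_add, cross3_eval, curl3_eval, hcurl]

theorem rt_divfree_is_curl_of_nedelec (k : ℕ) (hk : 1 ≤ k)
    (u : (Fin 3 → ℝ) → (Fin 3 → ℝ)) (hu : IsRT k u)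
    (hdiv : ∀ x, div3 u x = 0) :
    ∃ a b : (Fin 3 → ℝ) → (Fin 3 → ℝ),
      (∀ i, IsPolyFun3 (k - 1) (fun x => a x i)) ∧
      (∀ i, IsPolyFun3 (k - 1) (fun x => b x i)) ∧
      ∀ x, curl3 (fun y => a y + cross3 y (b y)) x = u x :=
  rt_divfree_is_curl_of_nedelec_general k u hu hdiv
end

section
/- The covariant (curl-conforming) transformation intertwines the curl with the Piola transformation: let J be an invertible real 3×3 matrix, b ∈ ℝ³, and let Ĝ : ℝ³ → ℝ³ be differentiable. Define G : ℝ³ → ℝ³ by G(y) := (Jᵀ)⁻¹ · Ĝ(J⁻¹(y − b)). Then G is differentiable and for every x ∈ ℝ³, (curl G)(J x + b) = (det J)⁻¹ · J · (curl Ĝ)(x). -/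
/-!
The curl of `F` at `x` is the axial vector of the skew part of the Jacobian `DF(x)`. By the
chain rule the Jacobian of `G` at `J x + b` is `Aᵀ DĜ(x) A` with `A = J⁻¹`, and congruence by `A`
acts on axial vectors through `adj A`, because `(A u) × (A v) = adj(A)ᵀ (u × v)`. Finally
`adj (J⁻¹) = (det J)⁻¹ J`.
-/

open Matrix

/-- `M - Mᵀ` is the matrix of `v ↦ skewAxial M × v`. -/
def skewAxial {R : Type*} [Ring R] (M : Matrix (Fin 3) (Fin 3) R) : Fin 3 → R :=
  ![M 2 1 - M 1 2, M 0 2 - M 2 0, M 1 0 - M 0 1]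

theorem skewAxial_transpose_mul_mul {R : Type*} [CommRing R] (A M : Matrix (Fin 3) (Fin 3) R) :
    skewAxial (Aᵀ * M * A) = A.adjugate *ᵥ skewAxial M := by
  ext i
  fin_cases i <;>
  · simp [skewAxial, adjugate_fin_three, mulVec, dotProduct, mul_apply, Fin.sum_univ_three]
    ring

theorem adjugate_nonsing_inv {K : Type*} [Field K] {n : Type*} [Fintype n] [DecidableEq n]
    (A : Matrix n n K) (hA : IsUnit A.det) : A⁻¹.adjugate = A.det⁻¹ • A := by
  have h : A = A.det • A⁻¹.adjugate := by
    conv_lhs => rw [← nonsing_inv_nonsing_inv A hA, inv_def, det_nonsing_inv,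
      Ring.inverse_eq_inv', inv_inv]
  rw [eq_inv_smul_iff₀ hA.ne_zero]
  exact h.symm

theorem HasFDerivAt.mulVec_comp_affine {𝕜 : Type*} [NontriviallyNormedField 𝕜] [CompleteSpace 𝕜]
    {k l m n : Type*} [Fintype k] [Fintype l] [Fintype m] [Fintype n] [DecidableEq k]
    [DecidableEq n] {G : (m → 𝕜) → (n → 𝕜)} {G' : (m → 𝕜) →L[𝕜] (n → 𝕜)}
    (B : Matrix l n 𝕜) (A : Matrix m k 𝕜) (b : k → 𝕜) {y : k → 𝕜}
    (hG : HasFDerivAt G G' (A *ᵥ (y - b))) :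
    HasFDerivAt (fun y => B *ᵥ G (A *ᵥ (y - b)))
      ((toLin' B).toContinuousLinearMap.comp (G'.comp (toLin' A).toContinuousLinearMap)) y := by
  have hA : HasFDerivAt (fun y => A *ᵥ (y - b)) (toLin' A).toContinuousLinearMap y := by
    simpa using ((toLin' A).toContinuousLinearMap.hasFDerivAt (x := y - b)).comp y
      ((hasFDerivAt_id y).sub_const b)
  exact (toLin' B).toContinuousLinearMap.hasFDerivAt.comp y (hG.comp y hA)

noncomputable def jacobianMatrix (𝕜 : Type*) [NontriviallyNormedField 𝕜] {m n : Type*}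
    [Fintype m] [DecidableEq m] (F : (m → 𝕜) → (n → 𝕜)) (x : m → 𝕜) : Matrix n m 𝕜 :=
  LinearMap.toMatrix' (fderiv 𝕜 F x : (m → 𝕜) →ₗ[𝕜] n → 𝕜)

theorem jacobianMatrix_mulVec_comp_affine {𝕜 : Type*} [NontriviallyNormedField 𝕜]
    [CompleteSpace 𝕜] {k l m n : Type*} [Fintype k] [Fintype l] [Fintype m] [Fintype n]
    [DecidableEq k] [DecidableEq m] [DecidableEq n] {G : (m → 𝕜) → (n → 𝕜)}
    (B : Matrix l n 𝕜) (A : Matrix m k 𝕜) (b : k → 𝕜) {y : k → 𝕜}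
    (hG : DifferentiableAt 𝕜 G (A *ᵥ (y - b))) :
    jacobianMatrix 𝕜 (fun y => B *ᵥ G (A *ᵥ (y - b))) y
      = B * jacobianMatrix 𝕜 G (A *ᵥ (y - b)) * A := by
  rw [jacobianMatrix, (hG.hasFDerivAt.mulVec_comp_affine B A b).fderiv, jacobianMatrix]
  simp [LinearMap.toMatrix'_comp, Matrix.mul_assoc]

theorem pd3_eq_jacobianMatrix {F : (Fin 3 → ℝ) → (Fin 3 → ℝ)} {x : Fin 3 → ℝ}
    (hF : DifferentiableAt ℝ F x) (k i : Fin 3) :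
    pd3 (fun y => F y k) i x = jacobianMatrix ℝ F x k i := by
  simp [pd3, jacobianMatrix, fderiv_apply hF k, LinearMap.toMatrix'_apply]

theorem curl3_eq_skewAxial_jacobianMatrix {F : (Fin 3 → ℝ) → (Fin 3 → ℝ)} {x : Fin 3 → ℝ}
    (hF : DifferentiableAt ℝ F x) : curl3 F x = skewAxial (jacobianMatrix ℝ F x) := by
  simp only [curl3, skewAxial, pd3_eq_jacobianMatrix hF]

theorem covariant_transform_intertwines_curl
    (J : Matrix (Fin 3) (Fin 3) ℝ) (hJ : IsUnit J.det) (b : Fin 3 → ℝ)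
    (Ghat : (Fin 3 → ℝ) → (Fin 3 → ℝ)) (hGhat : Differentiable ℝ Ghat) :
    Differentiable ℝ (fun y => (Jᵀ)⁻¹ *ᵥ Ghat (J⁻¹ *ᵥ (y - b))) ∧
    ∀ x : Fin 3 → ℝ,
      curl3 (fun y => (Jᵀ)⁻¹ *ᵥ Ghat (J⁻¹ *ᵥ (y - b))) (J *ᵥ x + b)
        = (J.det)⁻¹ • (J *ᵥ curl3 Ghat x) := by
  have hG : Differentiable ℝ (fun y => (Jᵀ)⁻¹ *ᵥ Ghat (J⁻¹ *ᵥ (y - b))) := fun y =>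
    ((hGhat _).hasFDerivAt.mulVec_comp_affine _ _ b).differentiableAt
  refine ⟨hG, fun x => ?_⟩
  have hx : J⁻¹ *ᵥ (J *ᵥ x + b - b) = x := by
    rw [add_sub_cancel_right, mulVec_mulVec, nonsing_inv_mul J hJ, one_mulVec]
  rw [curl3_eq_skewAxial_jacobianMatrix (hG _), jacobianMatrix_mulVec_comp_affine _ _ _ (hGhat _),
    hx, ← transpose_nonsing_inv, skewAxial_transpose_mul_mul, adjugate_nonsing_inv J hJ,
    smul_mulVec, curl3_eq_skewAxial_jacobianMatrix (hGhat x)]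
end
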